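/- Let ℍ_ℝ be the algebra of real quaternions and let f, g, h : ℍ_ℝ → ℍ_ℝ be ℝ-linear maps such that f is a Jordan left {g,h}-derivation. Then f is a left {g,h}-derivation if and only if f(i) = f(j) = f(k) = 0. -/

import Mathlib

/-!
If `a` and `b` commute, the Jordan identity is twice the left `{g,h}`-identity for `(a, b)`;
if they anticommute, it forces `a * g b + b * h a = 0`. Any two of the basis vectors `1, i, j, k`
either commute or anticommute with a purely imaginary product. So when `f` kills `i, j, k`, the
left identity holds on pairs of basis vectors, hence everywhere by bilinearity, and the second
identity follows from the first with `g` and `h` exchanged, because the Jordan identity is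
symmetric in `g` and `h`. Conversely `i = j * k` with `j, k` anticommuting gives
`f i = j * g k + k * h j = 0`, and likewise for `j` and `k`.
-/

open scoped Quaternion

variable {C A : Type*} [CommSemiring C] [Semiring A] [Algebra C A]

def IsJordanLeftDerivation (f g h : A →ₗ[C] A) : Prop :=
  ∀ a b : A, f (a * b + b * a) = 2 • (a * g b + b * h a)

namespace IsJordanLeftDerivation

variable {f g h : A →ₗ[C] A}

theorem swap (hf : IsJordanLeftDerivation f g h) : IsJordanLeftDerivation f h g := fun a b => by
  rw [add_comm, hf b a, add_comm]

variable [IsAddTorsionFree A] {a b : A}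

theorem map_mul_of_commute (hf : IsJordanLeftDerivation f g h) (hab : Commute a b) :
    f (a * b) = a * g b + b * h a := by
  apply nsmul_right_injective two_ne_zero
  simpa only [hab.eq, two_nsmul, map_add] using hf a b

theorem mul_add_mul_eq_zero_of_anticommute (hf : IsJordanLeftDerivation f g h)
    (hab : a * b + b * a = 0) : a * g b + b * h a = 0 := by
  apply nsmul_right_injective two_ne_zero
  simpa only [hab, map_zero, smul_zero, eq_comm] using hf a b

end IsJordanLeftDerivation

theorem Module.Basis.map_mul_eq_of_forall_basis {ι : Type*} (B : Module.Basis ι C A)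
    {f g h : A →ₗ[C] A} (hB : ∀ i j, f (B i * B j) = B i * g (B j) + B j * h (B i)) (a b : A) :
    f (a * b) = a * g b + b * h a := by
  have key : (LinearMap.mul C A).compr₂ f =
      (LinearMap.mul C A).compl₂ g + (LinearMap.mul C A).flip.comp h :=
    LinearMap.ext_basis B B fun i j => by simpa using hB i j
  simpa using LinearMap.congr_fun₂ key a b

namespace QuaternionAlgebra

variable {R : Type*} [CommRing R]

instance {c₁ c₂ c₃ : R} [IsAddTorsionFree R] : IsAddTorsionFree ℍ[R,c₁,c₂,c₃] :=
  ⟨fun _ hn a b hab => by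
    simp_rw [QuaternionAlgebra.ext_iff, re_smul, imI_smul, imJ_smul, imK_smul,
      nsmul_right_inj hn] at hab ⊢
    exact hab⟩

theorem map_eq_zero_of_re_eq_zero {M : Type*} [AddCommMonoid M] [Module R M] {c₁ c₂ c₃ : R}
    (f : ℍ[R,c₁,c₂,c₃] →ₗ[R] M) (hi : f ⟨0, 1, 0, 0⟩ = 0) (hj : f ⟨0, 0, 1, 0⟩ = 0)
    (hk : f ⟨0, 0, 0, 1⟩ = 0) {p : ℍ[R,c₁,c₂,c₃]} (hp : p.re = 0) : f p = 0 := by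
  have hdecomp : p = p.imI • ⟨0, 1, 0, 0⟩ + p.imJ • ⟨0, 0, 1, 0⟩ + p.imK • ⟨0, 0, 0, 1⟩ := by
    ext <;> simp [hp]
  rw [hdecomp, map_add, map_add, map_smul, map_smul, map_smul, hi, hj, hk]
  simp only [smul_zero, add_zero]

theorem commute_or_anticommute_basisOneIJK (c₁ c₃ : R) (i j : Fin 4) :
    Commute (basisOneIJK c₁ 0 c₃ i) (basisOneIJK c₁ 0 c₃ j) ∨
      (basisOneIJK c₁ 0 c₃ i * basisOneIJK c₁ 0 c₃ j +
          basisOneIJK c₁ 0 c₃ j * basisOneIJK c₁ 0 c₃ i = 0 ∧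
        (basisOneIJK c₁ 0 c₃ i * basisOneIJK c₁ 0 c₃ j).re = 0) := by
  fin_cases i <;> fin_cases j <;> simp [basisOneIJK, commute_iff_eq, QuaternionAlgebra.ext_iff]

end QuaternionAlgebra

instance Quaternion.instIsAddTorsionFree {R : Type*} [CommRing R] [IsAddTorsionFree R] :
    IsAddTorsionFree ℍ[R] :=
  inferInstanceAs (IsAddTorsionFree ℍ[R,-1,0,-1])

open QuaternionAlgebra in
theorem IsJordanLeftDerivation.quaternionAlgebra_map_mul {R : Type*} [CommRing R]
    [IsAddTorsionFree R] {c₁ c₃ : R} {f g h : ℍ[R,c₁,0,c₃] →ₗ[R] ℍ[R,c₁,0,c₃]}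
    (hf : IsJordanLeftDerivation f g h) (hi : f ⟨0, 1, 0, 0⟩ = 0) (hj : f ⟨0, 0, 1, 0⟩ = 0)
    (hk : f ⟨0, 0, 0, 1⟩ = 0) (p q : ℍ[R,c₁,0,c₃]) : f (p * q) = p * g q + q * h p := by
  refine (basisOneIJK c₁ 0 c₃).map_mul_eq_of_forall_basis (fun i j => ?_) p q
  rcases commute_or_anticommute_basisOneIJK c₁ c₃ i j with hc | ⟨hanti, hre⟩
  · exact hf.map_mul_of_commute hc
  · rw [map_eq_zero_of_re_eq_zero f hi hj hk hre, hf.mul_add_mul_eq_zero_of_anticommute hanti]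

theorem Quaternion.imaginary_units_eq_zero_of_map_mul_eq_zero {M : Type*} [Zero M]
    {F : ℍ[ℝ] → M} (hF : ∀ a b : ℍ[ℝ], a * b + b * a = 0 → F (a * b) = 0) :
    F ⟨0, 1, 0, 0⟩ = 0 ∧ F ⟨0, 0, 1, 0⟩ = 0 ∧ F ⟨0, 0, 0, 1⟩ = 0 := by
  -- In `ℍ[ℝ,-1,-1]`, unlike in `ℍ[ℝ]`, `simp` evaluates products of literals.
  have of_mul (a b c : ℍ[ℝ,-1,-1]) (hab : a * b + b * a = 0) (hc : a * b = c) : F c = 0 :=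
    hc ▸ hF a b hab
  exact ⟨of_mul ⟨0, 0, 1, 0⟩ ⟨0, 0, 0, 1⟩ _ (by ext <;> simp) (by ext <;> simp),
    of_mul ⟨0, 0, 0, 1⟩ ⟨0, 1, 0, 0⟩ _ (by ext <;> simp) (by ext <;> simp),
    of_mul ⟨0, 1, 0, 0⟩ ⟨0, 0, 1, 0⟩ _ (by ext <;> simp) (by ext <;> simp)⟩

/-- a Jordan left `{g,h}`-derivation `f` on the real quaternions is a left
`{g,h}`-derivation if and only if `f i = f j = f k = 0`. -/
theorem jordan_left_gh_derivation_quaternion_left_iff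
    (f g h : ℍ[ℝ] →ₗ[ℝ] ℍ[ℝ])
    (hf : ∀ p q : ℍ[ℝ], f (p * q + q * p) = 2 • (p * g q + q * h p)) :
    (∀ p q : ℍ[ℝ], f (p * q) = p * g q + q * h p ∧
        f (p * q) = p * h q + q * g p) ↔
      (f (⟨0, 1, 0, 0⟩ : ℍ[ℝ]) = 0 ∧ f (⟨0, 0, 1, 0⟩ : ℍ[ℝ]) = 0 ∧
        f (⟨0, 0, 0, 1⟩ : ℍ[ℝ]) = 0) := by
  have hf : IsJordanLeftDerivation f g h := hf
  constructor
  · intro hd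
    exact Quaternion.imaginary_units_eq_zero_of_map_mul_eq_zero fun a b hab =>
      (hd a b).1.trans (hf.mul_add_mul_eq_zero_of_anticommute hab)
  · rintro ⟨hi, hj, hk⟩ p q
    exact ⟨hf.quaternionAlgebra_map_mul hi hj hk p q,
      hf.swap.quaternionAlgebra_map_mul hi hj hk p q⟩
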